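/- arXiv:2603.27351 — 3 statements merged into one kernel-verified Lean document; each statement's English description precedes it below -/
import Mathlib

section
/- The Mielke energy Ψ(ν₁,ν₂,ν₃) = max(|ν₁ − ν₂ν₃|, |ν₂ − ν₁ν₃|, |ν₃ − ν₁ν₂|) is not convex as a function of (ν₁,ν₂,ν₃) on ℝ³. -/
/-- The Mielke energy Ψ(ν₁,ν₂,ν₃) = max(|ν₁ − ν₂ν₃|, |ν₂ − ν₁ν₃|, |ν₃ − ν₁ν₂|)
is not convex on ℝ³. -/
theorem mielke_not_convex :
    ¬ ConvexOn ℝ Set.univ (fun ν : Fin 3 → ℝ =>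
      max (max |ν 0 - ν 1 * ν 2| |ν 1 - ν 0 * ν 2|) |ν 2 - ν 0 * ν 1|) := by
  intro h
  have := h.2 (Set.mem_univ ![1,1,1]) (Set.mem_univ ![-1,-1,1])
    (by norm_num : (0:ℝ) ≤ 1/2) (by norm_num : (0:ℝ) ≤ 1/2) (by norm_num)
  simp only [Matrix.cons_val_zero, Matrix.cons_val_one, Matrix.head_cons] at this
  have h2 : ((1/2 : ℝ) • ![(1:ℝ),1,1] + (1/2 : ℝ) • ![(-1:ℝ),-1,1]) = ![0,0,1] := by
    funext i; fin_cases i <;> simp <;> norm_num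
  rw [h2] at this
  simp only [Matrix.cons_val_zero, Matrix.cons_val_one, Matrix.head_cons,
    Matrix.cons_val_two, Matrix.tail_cons] at this
  norm_num at this
end

section
/- The Mielke energy as a function of the seven polyconvexity variables, Φ(x₁,…,x₆,x₇) := max(|x₁ − x₄|, |x₂ − x₅|, |x₃ − x₆|), is convex on ℝ^7 and satisfies Φ(m(ν)) = max(|ν₁ − ν₂ν₃|, |ν₂ − ν₁ν₃|, |ν₃ − ν₁ν₂|) where m(ν) = (ν₁,ν₂,ν₃,ν₂ν₃,ν₁ν₃,ν₁ν₂,ν₁ν₂ν₃). -/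
/-- The vector of elementary polynomials of the signed singular values. -/
def mPoly (ν₁ ν₂ ν₃ : ℝ) : Fin 7 → ℝ :=
  ![ν₁, ν₂, ν₃, ν₂ * ν₃, ν₁ * ν₃, ν₁ * ν₂, ν₁ * ν₂ * ν₃]

lemma absDiffConvex (i j : Fin 7) :
    ConvexOn ℝ Set.univ (fun x : Fin 7 → ℝ => |x i - x j|) := by
  have h : ConvexOn ℝ Set.univ (fun y : ℝ => |y|) := by
    have e : (fun y : ℝ => |y|) = norm := funext fun y => (Real.norm_eq_abs y).symm
    rw [e]
    exact convexOn_univ_norm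
  have hf := h.comp_affineMap
    (((LinearMap.proj i : (Fin 7 → ℝ) →ₗ[ℝ] ℝ) - (LinearMap.proj j : (Fin 7 → ℝ) →ₗ[ℝ] ℝ)).toAffineMap)
  have e : (fun x : Fin 7 → ℝ => |x i - x j|) = ((fun y : ℝ => |y|) ∘
      ⇑(((LinearMap.proj i : (Fin 7 → ℝ) →ₗ[ℝ] ℝ) - (LinearMap.proj j : (Fin 7 → ℝ) →ₗ[ℝ] ℝ)).toAffineMap)) := by
    funext x
    simp
  rw [e]
  exact hf

/-- The Mielke energy as a function of the seven polyconvexity variables,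
Φ(x) = max(|x₁ − x₄|, |x₂ − x₅|, |x₃ − x₆|), is convex on ℝ⁷ and composed with
m recovers the Mielke energy. -/
theorem mielke_polyconvex_witness :
    ConvexOn ℝ Set.univ (fun x : Fin 7 → ℝ =>
      max (max |x 0 - x 3| |x 1 - x 4|) |x 2 - x 5|) ∧
    (∀ ν₁ ν₂ ν₃ : ℝ,
      (fun x : Fin 7 → ℝ => max (max |x 0 - x 3| |x 1 - x 4|) |x 2 - x 5|)
          (mPoly ν₁ ν₂ ν₃)
        = max (max |ν₁ - ν₂ * ν₃| |ν₂ - ν₁ * ν₃|) |ν₃ - ν₁ * ν₂|) := by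
  constructor
  · exact ((absDiffConvex 0 3).sup (absDiffConvex 1 4)).sup (absDiffConvex 2 5)
  · intro ν₁ ν₂ ν₃
    rfl
end

section
/- For a feed-forward network with layers z_{i+1} = g_i(W_i^z · z_i + W_i^x · x + b_i) (z₀ = 0, W₀^z = 0), if every entry of each W_i^z for i ≥ 1 is nonnegative and each activation g_i is convex and non-decreasing (applied componentwise), then the final output x ↦ z_k is a convex function of the input x. -/
/-- Layer activations of a feed-forward network
z_{i+1} = g_i(W_i^z · z_i + W_i^x · x + b_i), with z₀ = 0 (so W₀^z is irrelevant),
activations applied componentwise. -/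
def netZ (n : ℕ → ℕ) (d : ℕ)
    (Wz : (i : ℕ) → Matrix (Fin (n (i + 1))) (Fin (n i)) ℝ)
    (Wx : (i : ℕ) → Matrix (Fin (n (i + 1))) (Fin d) ℝ)
    (b : (i : ℕ) → Fin (n (i + 1)) → ℝ)
    (g : ℕ → ℝ → ℝ) (x : Fin d → ℝ) : (i : ℕ) → Fin (n i) → ℝ
  | 0 => 0
  | i + 1 => fun j =>
      g i ((Wz i).mulVec (netZ n d Wz Wx b g x i) j + (Wx i).mulVec x j + b i j)

lemma convexOn_finset_sum {E : Type*} [AddCommMonoid E] [Module ℝ E]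
    {ι : Type*} (t : Finset ι) {f : ι → E → ℝ}
    (hf : ∀ i ∈ t, ConvexOn ℝ Set.univ (f i)) :
    ConvexOn ℝ Set.univ (fun x => ∑ i ∈ t, f i x) := by
  classical
  induction t using Finset.induction with
  | empty => simpa using convexOn_const (0 : ℝ) convex_univ
  | insert _ _ h ih =>
    simp only [Finset.sum_insert h]
    exact (hf _ (Finset.mem_insert_self _ _)).add
      (ih fun i hi => hf i (Finset.mem_insert_of_mem hi))

lemma convexOn_comp_mono {E : Type*} [AddCommMonoid E] [Module ℝ E]
    {g : ℝ → ℝ} (hg : ConvexOn ℝ Set.univ g) (hm : Monotone g)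
    {f : E → ℝ} (hf : ConvexOn ℝ Set.univ f) :
    ConvexOn ℝ Set.univ (fun x => g (f x)) := by
  refine ⟨convex_univ, fun x _ y _ a c ha hc hac => ?_⟩
  calc g (f (a • x + c • y)) ≤ g (a • f x + c • f y) :=
        hm (hf.2 trivial trivial ha hc hac)
    _ ≤ a • g (f x) + c • g (f y) := hg.2 trivial trivial ha hc hac

lemma convexOn_affine (d : ℕ) (w : Fin d → ℝ) (c : ℝ) :
    ConvexOn ℝ Set.univ (fun x : Fin d → ℝ => (∑ l, w l * x l) + c) := by
  refine ⟨convex_univ, fun x _ y _ a b ha hb hab => le_of_eq ?_⟩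
  simp only [Pi.add_apply, Pi.smul_apply, smul_eq_mul]
  have h1 : ∑ l, w l * (a * x l + b * y l)
      = a * (∑ l, w l * x l) + b * (∑ l, w l * y l) := by
    rw [Finset.mul_sum, Finset.mul_sum, ← Finset.sum_add_distrib]
    exact Finset.sum_congr rfl fun l _ => by ring
  rw [h1]
  linear_combination (-c) * hab

/-- ICNN property: if the weights W_i^z (i ≥ 1) are entrywise nonnegative and all
activations are convex and non-decreasing, then every component of the network
output z_k is a convex function of the input x. -/
theorem icnn_convex (n : ℕ → ℕ) (d k : ℕ)
    (Wz : (i : ℕ) → Matrix (Fin (n (i + 1))) (Fin (n i)) ℝ)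
    (Wx : (i : ℕ) → Matrix (Fin (n (i + 1))) (Fin d) ℝ)
    (b : (i : ℕ) → Fin (n (i + 1)) → ℝ)
    (g : ℕ → ℝ → ℝ)
    (hWz : ∀ i : ℕ, 1 ≤ i → ∀ (j : Fin (n (i + 1))) (l : Fin (n i)), 0 ≤ Wz i j l)
    (hg : ∀ i : ℕ, ConvexOn ℝ Set.univ (g i) ∧ Monotone (g i)) :
    ∀ j : Fin (n k),
      ConvexOn ℝ Set.univ (fun x : Fin d → ℝ => netZ n d Wz Wx b g x k j) := by
  induction k with
  | zero =>
    intro j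
    simpa [netZ] using convexOn_const (0 : ℝ) convex_univ
  | succ k ih =>
    intro j
    apply convexOn_comp_mono (hg k).1 (hg k).2
    have hz : ConvexOn ℝ Set.univ
        (fun x : Fin d → ℝ => (Wz k).mulVec (netZ n d Wz Wx b g x k) j) := by
      rcases Nat.eq_zero_or_pos k with hk | hk
      · subst hk
        have : (fun x : Fin d → ℝ => (Wz 0).mulVec (netZ n d Wz Wx b g x 0) j)
            = fun _ => 0 := by
          funext x
          simp [netZ, Matrix.mulVec, dotProduct]
        rw [this]
        exact convexOn_const 0 convex_univ
      · simp only [Matrix.mulVec, dotProduct]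
        exact convexOn_finset_sum _ fun l _ =>
          ((ih l).smul (hWz k hk j l)).congr (by intro x _; simp [smul_eq_mul])
            |>.subset subset_rfl convex_univ
    have ha : ConvexOn ℝ Set.univ
        (fun x : Fin d → ℝ => (Wx k).mulVec x j + b k j) := by
      simpa [Matrix.mulVec, dotProduct] using convexOn_affine d (Wx k j) (b k j)
    simpa [add_assoc, Pi.add_def] using hz.add ha
end
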